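/- If K ≥ 2 and the sample size satisfies n ≤ √K, then for every behavior policy π_D, reward bound R_max > 0 and variance bound vector σ², sup over target policies π of R_n*(π, π_D, R_max, σ²) ≥ (1 − 1/√2)^{√2} · R_max² / 4. In particular, the minimax risk over target policies is bounded below by a positive constant times R_max², independently of n and K. -/

import Mathlib

/-!
Le Cam's two-point method: let the target policy play deterministically an action `a'` with
`πD a' ≤ 1/K`. The deterministic environments with reward `0` everywhere, resp. `Rmax` at
`a'` and `0` elsewhere, are admissible, have values `0` and `Rmax`, and induce the same data law
on the event that `a'` is never sampled, which has probability `(1 - πD a')ⁿ`. Since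
`(x - 0)² + (x - Rmax)² ≥ Rmax² / 2`, every estimator has MSE at least `(1 - πD a')ⁿ Rmax² / 4`
in one of the two. By Bernoulli's inequality `(1 - πD a')ⁿ ≥ 1 - n / K ≥ 1 - 1 / √2`, which
dominates `(1 - 1 / √2) ^ √2`.
-/

open MeasureTheory ProbabilityTheory ENNReal Filter

noncomputable section

namespace OffPolicy

variable {K : ℕ}

/-- `π` is a probability mass function on the action set. -/
def IsPolicy (π : Fin K → ℝ) : Prop := (∀ a, 0 ≤ π a) ∧ ∑ a, π a = 1

/-- A behavior policy: a pmf with everywhere positive probabilities. -/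
def IsBehaviorPolicy (πD : Fin K → ℝ) : Prop := (∀ a, 0 < πD a) ∧ ∑ a, πD a = 1

/-- The joint distribution of a single pair `(A, R)` with `A ~ πD` and `R ~ Φ(·|A)`. -/
def jointMeasure (πD : Fin K → ℝ) (Φ : Fin K → ProbabilityMeasure ℝ) :
    Measure (Fin K × ℝ) :=
  ∑ a : Fin K, (πD a).toNNReal • ((Measure.dirac a).prod (Φ a : Measure ℝ))

instance jointMeasure_finite (πD : Fin K → ℝ) (Φ : Fin K → ProbabilityMeasure ℝ) :
    IsFiniteMeasure (jointMeasure πD Φ) := by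
  unfold jointMeasure
  infer_instance

/-- The distribution of the i.i.d. dataset `D^n = ((A_1,R_1),…,(A_n,R_n))`. -/
def dataMeasure (n : ℕ) (πD : Fin K → ℝ) (Φ : Fin K → ProbabilityMeasure ℝ) :
    Measure (Fin n → Fin K × ℝ) :=
  Measure.pi fun _ => jointMeasure πD Φ

/-- Mean reward `r_Φ(a)` of action `a`. -/
def envMean (Φ : Fin K → ProbabilityMeasure ℝ) (a : Fin K) : ℝ :=
  ∫ x, x ∂(Φ a : Measure ℝ)

/-- Reward variance `σ²_Φ(a)` of action `a`. -/
def envVar (Φ : Fin K → ProbabilityMeasure ℝ) (a : Fin K) : ℝ :=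
  ∫ x, (x - envMean Φ a) ^ 2 ∂(Φ a : Measure ℝ)

/-- The value `v^π_Φ = Σ_a π(a) r_Φ(a)` of the target policy. -/
def value (π : Fin K → ℝ) (Φ : Fin K → ProbabilityMeasure ℝ) : ℝ :=
  ∑ a, π a * envMean Φ a

/-- Mean squared error `E[(v̂(D^n) − v^π_Φ)²]` of an estimator. -/
def mse (n : ℕ) (π πD : Fin K → ℝ) (Φ : Fin K → ProbabilityMeasure ℝ)
    (est : (Fin n → Fin K × ℝ) → ℝ) : ℝ≥0∞ :=
  ∫⁻ d, ENNReal.ofReal ((est d - value π Φ) ^ 2) ∂(dataMeasure n πD Φ)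

/-- Environments with square-integrable rewards, means within `[0, Rmax]`,
and variances bounded by `σ2`. -/
def ValidEnv (Rmax : ℝ) (σ2 : Fin K → ℝ) (Φ : Fin K → ProbabilityMeasure ℝ) : Prop :=
  (∀ a, MemLp (fun x => x) 2 (Φ a : Measure ℝ)) ∧
  (∀ a, 0 ≤ envMean Φ a ∧ envMean Φ a ≤ Rmax) ∧
  (∀ a, envVar Φ a ≤ σ2 a)

/-- Minimax risk `R_n^*(π, πD, Rmax, σ²)`. -/
def minimaxRisk (n : ℕ) (π πD : Fin K → ℝ) (Rmax : ℝ) (σ2 : Fin K → ℝ) : ℝ≥0∞ :=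
  ⨅ (est : (Fin n → Fin K × ℝ) → ℝ) (_ : Measurable est),
    ⨆ (Φ : Fin K → ProbabilityMeasure ℝ) (_ : ValidEnv Rmax σ2 Φ), mse n π πD Φ est

/-- The likelihood ratio estimator. -/
def vLR (n : ℕ) (π πD : Fin K → ℝ) (d : Fin n → Fin K × ℝ) : ℝ :=
  (1 / (n : ℝ)) * ∑ i, (π (d i).1 / πD (d i).1) * (d i).2

/-- `n(a)`: the number of samples of action `a` in the dataset. -/
def cnt (n : ℕ) (d : Fin n → Fin K × ℝ) (a : Fin K) : ℕ :=
  (Finset.univ.filter fun i => (d i).1 = a).card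

/-- `r̂(a) = R(a)/n(a)` if `n(a) > 0`, and `0` otherwise (division by zero is zero). -/
def rhat (n : ℕ) (d : Fin n → Fin K × ℝ) (a : Fin K) : ℝ :=
  if 0 < cnt n d a then
    (∑ i ∈ Finset.univ.filter (fun i => (d i).1 = a), (d i).2) / (cnt n d a : ℝ)
  else 0

/-- The regression estimator. -/
def vReg (n : ℕ) (π : Fin K → ℝ) (d : Fin n → Fin K × ℝ) : ℝ :=
  ∑ a, π a * rhat n d a

lemma one_sub_inv_sqrt_two_rpow_le_one_sub_pow {n : ℕ} (hK : 2 ≤ K) (hn : (n : ℝ) ≤ √K)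
    {q : ℝ} (hq0 : 0 ≤ q) (hq : q ≤ 1 / K) :
    (1 - 1 / √2) ^ √2 ≤ (1 - q) ^ n := by
  have hK' : (2 : ℝ) ≤ K := by exact_mod_cast hK
  have hsqrt2 : 1 ≤ √(2 : ℝ) := Real.one_le_sqrt.2 (by norm_num)
  calc (1 - 1 / √2) ^ √2 ≤ 1 - 1 / √2 :=
        Real.rpow_le_self_of_le_one (sub_nonneg.2 (div_le_one_of_le₀ hsqrt2 (by positivity)))
          (by simp) hsqrt2
    _ ≤ 1 - 1 / √K := by gcongr
    _ = 1 - √K * (1 / K) := by rw [mul_one_div, Real.sqrt_div_self']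
    _ ≤ 1 - n * q := by gcongr
    _ ≤ (1 - q) ^ n := by
        have hK_inv : (1 : ℝ) / K ≤ 1 := div_le_one_of_le₀ (by linarith) (by positivity)
        simpa [sub_eq_add_neg] using one_add_mul_le_pow (a := -q) (by linarith) n

lemma exists_le_inv_card_of_sum_eq_one {ι : Type*} [Fintype ι] {p : ι → ℝ}
    (hp : ∑ a, p a = 1) : ∃ a, p a ≤ 1 / Fintype.card ι := by
  have hne : (Finset.univ : Finset ι).Nonempty :=
    Finset.nonempty_of_sum_ne_zero (hp ▸ one_ne_zero)
  have hsum : ∑ a, p a ≤ ∑ _a : ι, (1 / Fintype.card ι : ℝ) := by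
    have hcard : Fintype.card ι ≠ 0 := by simpa using hne.card_pos.ne'
    simp [hp, hcard]
  obtain ⟨a, -, ha⟩ := Finset.exists_le_of_sum_le hne hsum
  exact ⟨a, ha⟩

theorem le_lintegral_sq_sub_add_lintegral_sq_sub {Ω : Type*} [MeasurableSpace Ω]
    {μ ν : Measure Ω} {E : Set Ω} (hE : μ.restrict E = ν.restrict E)
    {f : Ω → ℝ} (hf : Measurable f) (u v : ℝ) :
    μ E * ENNReal.ofReal ((u - v) ^ 2 / 2) ≤
      (∫⁻ x, ENNReal.ofReal ((f x - u) ^ 2) ∂μ) + ∫⁻ x, ENNReal.ofReal ((f x - v) ^ 2) ∂ν := by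
  have hpoint (x : Ω) : ENNReal.ofReal ((u - v) ^ 2 / 2) ≤
      ENNReal.ofReal ((f x - u) ^ 2) + ENNReal.ofReal ((f x - v) ^ 2) := by
    rw [← ENNReal.ofReal_add (sq_nonneg _) (sq_nonneg _)]
    exact ENNReal.ofReal_le_ofReal (by nlinarith [sq_nonneg (2 * f x - u - v)])
  calc μ E * ENNReal.ofReal ((u - v) ^ 2 / 2)
      = ∫⁻ _ in E, ENNReal.ofReal ((u - v) ^ 2 / 2) ∂μ := by rw [setLIntegral_const, mul_comm]
    _ ≤ ∫⁻ x in E, (ENNReal.ofReal ((f x - u) ^ 2) + ENNReal.ofReal ((f x - v) ^ 2)) ∂μ :=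
        lintegral_mono hpoint
    _ = (∫⁻ x in E, ENNReal.ofReal ((f x - u) ^ 2) ∂μ) +
          ∫⁻ x in E, ENNReal.ofReal ((f x - v) ^ 2) ∂ν := by
        rw [lintegral_add_left ((hf.sub_const u).pow_const 2).ennreal_ofReal, hE]
    _ ≤ _ := add_le_add (setLIntegral_le_lintegral _ _) (setLIntegral_le_lintegral _ _)

lemma jointMeasure_prod_univ (πD : Fin K → ℝ) (Φ : Fin K → ProbabilityMeasure ℝ)
    (s : Finset (Fin K)) :
    jointMeasure πD Φ ((s : Set (Fin K)) ×ˢ Set.univ) = ∑ a ∈ s, ENNReal.ofReal (πD a) := by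
  simp [jointMeasure, Measure.finsetSum_apply, Measure.prod_prod, Set.indicator, ENNReal.ofReal]

lemma jointMeasure_restrict_congr (πD : Fin K → ℝ) {Φ Ψ : Fin K → ProbabilityMeasure ℝ}
    {s : Finset (Fin K)} (h : ∀ a ∈ s, Φ a = Ψ a) :
    (jointMeasure πD Φ).restrict ((s : Set (Fin K)) ×ˢ Set.univ) =
      (jointMeasure πD Ψ).restrict ((s : Set (Fin K)) ×ˢ Set.univ) := by
  ext t ht
  simp only [Measure.restrict_apply ht, jointMeasure, Measure.finsetSum_apply,
    Measure.smul_apply]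
  refine Finset.sum_congr rfl fun a _ => ?_
  by_cases ha : a ∈ s
  · rw [h a ha]
  · have hnull (μ : Measure ℝ) [SFinite μ] :
        (Measure.dirac a).prod μ (t ∩ (s : Set (Fin K)) ×ˢ Set.univ) = 0 := by
      refine measure_mono_null Set.inter_subset_right ?_
      simp [Measure.prod_prod, ha]
    rw [hnull, hnull]

def actionsIn (n : ℕ) (s : Finset (Fin K)) : Set (Fin n → Fin K × ℝ) :=
  Set.univ.pi fun _ => (s : Set (Fin K)) ×ˢ Set.univ

lemma dataMeasure_restrict_actionsIn_congr (n : ℕ) (πD : Fin K → ℝ)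
    {Φ Ψ : Fin K → ProbabilityMeasure ℝ} {s : Finset (Fin K)} (h : ∀ a ∈ s, Φ a = Ψ a) :
    (dataMeasure n πD Φ).restrict (actionsIn n s) = (dataMeasure n πD Ψ).restrict (actionsIn n s) := by
  simp only [actionsIn, dataMeasure, Measure.restrict_pi_pi, jointMeasure_restrict_congr πD h]

lemma dataMeasure_actionsIn (n : ℕ) (πD : Fin K → ℝ) (Φ : Fin K → ProbabilityMeasure ℝ)
    (s : Finset (Fin K)) :
    dataMeasure n πD Φ (actionsIn n s) = (∑ a ∈ s, ENNReal.ofReal (πD a)) ^ n := by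
  simp [actionsIn, dataMeasure, Measure.pi_pi, jointMeasure_prod_univ]

lemma dataMeasure_actionsIn_erase (n : ℕ) {πD : Fin K → ℝ} (hπD : IsBehaviorPolicy πD)
    (Φ : Fin K → ProbabilityMeasure ℝ) (a : Fin K) :
    dataMeasure n πD Φ (actionsIn n (Finset.univ.erase a)) = ENNReal.ofReal ((1 - πD a) ^ n) := by
  have hmiss : ∑ b ∈ Finset.univ.erase a, πD b = 1 - πD a := by
    rw [Finset.sum_erase_eq_sub (Finset.mem_univ a), hπD.2]
  have hnonneg (b : Fin K) (_ : b ∈ Finset.univ.erase a) : 0 ≤ πD b := (hπD.1 b).le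
  rw [dataMeasure_actionsIn, ← ENNReal.ofReal_sum_of_nonneg hnonneg, hmiss,
    ENNReal.ofReal_pow (hmiss ▸ Finset.sum_nonneg hnonneg)]

def diracEnv (c : Fin K → ℝ) : Fin K → ProbabilityMeasure ℝ :=
  fun a => ⟨Measure.dirac (c a), inferInstance⟩

@[simp]
lemma envMean_diracEnv (c : Fin K → ℝ) (a : Fin K) : envMean (diracEnv c) a = c a := by
  simp [envMean, diracEnv]

@[simp]
lemma envVar_diracEnv (c : Fin K → ℝ) (a : Fin K) : envVar (diracEnv c) a = 0 := by
  simp [envVar, diracEnv]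

lemma validEnv_diracEnv {Rmax : ℝ} {σ2 : Fin K → ℝ} (hσ : ∀ a, 0 ≤ σ2 a)
    {c : Fin K → ℝ} (hc : ∀ a, 0 ≤ c a ∧ c a ≤ Rmax) :
    ValidEnv Rmax σ2 (diracEnv c) :=
  ⟨fun a => (memLp_const (c a)).ae_eq (ae_eq_dirac fun x : ℝ => x).symm,
    fun a => by simpa using hc a, fun a => by simpa using hσ a⟩

lemma isPolicy_single (a : Fin K) : IsPolicy (Pi.single a (1 : ℝ)) :=
  ⟨fun b => by by_cases h : b = a <;> simp [h], by simp⟩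

@[simp]
lemma value_single (a : Fin K) (Φ : Fin K → ProbabilityMeasure ℝ) :
    value (Pi.single a 1) Φ = envMean Φ a := by
  simp [value, Pi.single_apply]

theorem ofReal_le_minimaxRisk_single (n : ℕ) {πD : Fin K → ℝ} (hπD : IsBehaviorPolicy πD)
    {Rmax : ℝ} (hR : 0 ≤ Rmax) {σ2 : Fin K → ℝ} (hσ : ∀ a, 0 ≤ σ2 a) (a' : Fin K) :
    ENNReal.ofReal ((1 - πD a') ^ n * Rmax ^ 2 / 4) ≤
      minimaxRisk n (Pi.single a' 1) πD Rmax σ2 := by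
  refine le_iInf₂ fun est hest => ?_
  set M := ⨆ (Φ : Fin K → ProbabilityMeasure ℝ) (_ : ValidEnv Rmax σ2 Φ),
    mse n (Pi.single a' 1) πD Φ est
  have hle (Φ) (hΦ : ValidEnv Rmax σ2 Φ) : mse n (Pi.single a' 1) πD Φ est ≤ M :=
    le_iSup₂ (f := fun Φ (_ : ValidEnv Rmax σ2 Φ) => mse n (Pi.single a' 1) πD Φ est) Φ hΦ
  set Φ₀ := diracEnv (0 : Fin K → ℝ)
  set Φ₁ := diracEnv (Pi.single a' Rmax)
  have hΦ₀ : ValidEnv Rmax σ2 Φ₀ := validEnv_diracEnv hσ fun _ => ⟨le_rfl, hR⟩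
  have hΦ₁ : ValidEnv Rmax σ2 Φ₁ :=
    validEnv_diracEnv hσ fun a => by by_cases h : a = a' <;> simp [h, hR]
  have hagree : ∀ a ∈ Finset.univ.erase a', Φ₀ a = Φ₁ a := fun a ha => by
    simp only [Φ₀, Φ₁, diracEnv, Pi.single_eq_of_ne (Finset.ne_of_mem_erase ha), Pi.zero_apply]
    rfl
  have hsum := le_lintegral_sq_sub_add_lintegral_sq_sub
    (dataMeasure_restrict_actionsIn_congr n πD hagree) hest
    (value (Pi.single a' 1) Φ₀) (value (Pi.single a' 1) Φ₁)
  have hgap : (value (Pi.single a' 1) Φ₀ - value (Pi.single a' 1) Φ₁) ^ 2 / 2 = Rmax ^ 2 / 2 := by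
    simp [Φ₀, Φ₁]
  rw [dataMeasure_actionsIn_erase n hπD, hgap] at hsum
  refine (ENNReal.mul_le_mul_iff_right two_ne_zero ENNReal.ofNat_ne_top).mp ?_
  calc 2 * ENNReal.ofReal ((1 - πD a') ^ n * Rmax ^ 2 / 4)
      = ENNReal.ofReal ((1 - πD a') ^ n) * ENNReal.ofReal (Rmax ^ 2 / 2) := by
        rw [← ENNReal.ofReal_mul' (by positivity), ← ENNReal.ofReal_ofNat 2,
          ← ENNReal.ofReal_mul zero_le_two]
        ring_nf
    _ ≤ mse n (Pi.single a' 1) πD Φ₀ est + mse n (Pi.single a' 1) πD Φ₁ est := hsum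
    _ ≤ M + M := add_le_add (hle Φ₀ hΦ₀) (hle Φ₁ hΦ₁)
    _ = 2 * M := (two_mul M).symm

/-- Corollary: for `K ≥ 2` and sample size `n ≤ √K`, the minimax
risk, after taking a supremum over target policies, is at least
`(1 − 1/√2)^{√2} · R_max²/4`; a constant (independent of `n` and `K`) times `R_max²`. -/
theorem sup_minimaxRisk_small_sample {K : ℕ} (hK : 2 ≤ K)
    (n : ℕ) (hn : (n : ℝ) ≤ Real.sqrt K)
    (πD : Fin K → ℝ) (hπD : IsBehaviorPolicy πD)
    (Rmax : ℝ) (hR : 0 < Rmax) (σ2 : Fin K → ℝ) (hσ : ∀ a, 0 ≤ σ2 a) :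
    ENNReal.ofReal ((1 - 1 / Real.sqrt 2) ^ (Real.sqrt 2) * Rmax ^ 2 / 4) ≤
      ⨆ (π : Fin K → ℝ) (_ : IsPolicy π), minimaxRisk n π πD Rmax σ2 := by
  obtain ⟨a', ha'⟩ := exists_le_inv_card_of_sum_eq_one hπD.2
  rw [Fintype.card_fin] at ha'
  refine le_iSup₂_of_le (Pi.single a' 1) (isPolicy_single a') ?_
  refine le_trans ?_ (ofReal_le_minimaxRisk_single n hπD hR.le hσ a')
  gcongr
  exact one_sub_inv_sqrt_two_rpow_le_one_sub_pow hK hn (hπD.1 a').le ha'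

end OffPolicy
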